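/- Let δ ∈ (0,1) and ε > 0. Let μ be a probability measure on ℝ^D × {0,1} with coordinate random variables (X, Z), let h : ℝ^D → ℝ^D be a measurable guarding function, and let θ ∈ ℝ^D, φ ∈ ℝ satisfy θᵀh(x) + φ ≠ 0 for μ-almost every x. Define the downstream prediction Ŷ = τ(θᵀh(X) + φ) ∈ {0,1} ⊆ ℝ. If I_{V^δ}(h(X) → Z) < ε, then I_{V^δ}(Ŷ → Z) < ε, where I_{V^δ}(h(X) → Z) is computed with the family V^δ on ℝ^D and I_{V^δ}(Ŷ → Z) is computed with the family V^δ on ℝ. In words, if h ε-guards X against Z with respect to δ-discretized binary log-linear models, then a binary downstream hard-thresholded linear classifier trained over the guarded representations cannot leak more than ε of V^δ-information about Z. -/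

import Mathlib

open MeasureTheory
open scoped BigOperators

/-- The logistic function `σ(u) = 1/(1+exp(−u))`. -/
noncomputable def logistic (u : ℝ) : ℝ := 1 / (1 + Real.exp (-u))

/-- The hard threshold function `τ(u) = 1` if `u > 0` and `τ(u) = 0` otherwise. -/
noncomputable def hardThreshold (u : ℝ) : ℝ := if u > 0 then 1 else 0

/-- The `δ`-discretization function `ρ_δ(p) = δ` if `p ≥ 1/2` and `1 − δ` otherwise. -/
noncomputable def discretize (δ : ℝ) (p : ℝ) : ℝ := if p ≥ 1/2 then δ else 1 - δ

/-- A member of the family `V^δ` of `δ`-discretized binary log-linear models, with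
parameters `a, γ`: `q(0|x) = ρ_δ(σ(aᵀx+γ))` and `q(1|x) = 1 − q(0|x)` (labels encoded
as `Bool`). -/
noncomputable def qDisc {ι : Type*} [Fintype ι] (δ : ℝ) (a : ι → ℝ) (γ : ℝ)
    (x : ι → ℝ) (z : Bool) : ℝ :=
  if z then 1 - discretize δ (logistic ((∑ i, a i * x i) + γ))
  else discretize δ (logistic ((∑ i, a i * x i) + γ))

/-- The conditional `V^δ`-entropy `H_{V^δ}(Z|X) = −sup_{q∈V^δ} E[log q(z|x)]`. -/
noncomputable def condEntDisc {ι : Type*} [Fintype ι] (δ : ℝ)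
    (μ : Measure ((ι → ℝ) × Bool)) : ℝ :=
  - ⨆ p : (ι → ℝ) × ℝ, ∫ w, Real.log (qDisc δ p.1 p.2 w.1 w.2) ∂μ

/-- The `V^δ`-entropy `H_{V^δ}(Z) = −sup E[log q(z)]` over input-independent members
of `V^δ` (those with `a = 0`). -/
noncomputable def entDisc {ι : Type*} [Fintype ι] (δ : ℝ)
    (μ : Measure ((ι → ℝ) × Bool)) : ℝ :=
  - ⨆ γ : ℝ, ∫ w, Real.log (qDisc δ (fun _ : ι => (0:ℝ)) γ w.1 w.2) ∂μ

/-- The `V^δ`-information `I_{V^δ}(X → Z) = H_{V^δ}(Z) − H_{V^δ}(Z|X)`. -/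
noncomputable def vInfoDisc {ι : Type*} [Fintype ι] (δ : ℝ)
    (μ : Measure ((ι → ℝ) × Bool)) : ℝ :=
  entDisc δ μ - condEntDisc δ μ

/-
A model of `V^δ` only sees on which side of its hyperplane an input lies, so its log-likelihood is
a function of the sign of `aᵀx + γ`. On the two-point set `{0, 1}` that contains `Ŷ`, a one-dimensional
model `a ŷ + γ` accepts everything, nothing, only `1` or only `0`; since `θᵀh(X) + φ ≠ 0` almost
surely, the same decision is taken almost surely by the model on `h(X)` with parameters `(0, 1)`,
`(0, -1)`, `(θ, φ)` or `(-θ, -φ)`. Hence every model on `Ŷ` is matched by one on `h(X)`, and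
`H(Z | h(X)) ≤ H(Z | Ŷ)`. The input-independent models do not see the input at all, so both
`V^δ`-entropies of `Z` agree, and `I(Ŷ → Z) ≤ I(h(X) → Z) < ε`.
-/

lemma logistic_ge_half_iff (u : ℝ) : 1 / 2 ≤ logistic u ↔ 0 ≤ u := by
  have hpos : 0 < 1 + Real.exp (-u) := by positivity
  rw [logistic, div_le_div_iff₀ two_pos hpos, one_mul, one_mul, ← sub_nonneg,
    show 2 - (1 + Real.exp (-u)) = 1 - Real.exp (-u) by ring, sub_nonneg, Real.exp_le_one_iff,
    neg_nonpos]

lemma discretize_logistic (δ u : ℝ) :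
    discretize δ (logistic u) = if 0 ≤ u then δ else 1 - δ :=
  if_congr (logistic_ge_half_iff u) rfl rfl

lemma measurable_discretize (δ : ℝ) : Measurable (discretize δ) :=
  Measurable.ite (measurableSet_le measurable_const measurable_id) measurable_const measurable_const

lemma measurable_logistic : Measurable logistic := by
  unfold logistic
  fun_prop

lemma measurable_hardThreshold : Measurable hardThreshold :=
  Measurable.ite (measurableSet_lt measurable_const measurable_id) measurable_const measurable_const

section qDisc

variable {ι κ : Type*} [Fintype ι] [Fintype κ] {δ : ℝ}

lemma qDisc_congr {a : ι → ℝ} {γ : ℝ} {x : ι → ℝ} {a' : κ → ℝ} {γ' : ℝ} {x' : κ → ℝ}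
    (h : 0 ≤ ∑ i, a i * x i + γ ↔ 0 ≤ ∑ i, a' i * x' i + γ') (z : Bool) :
    qDisc δ a γ x z = qDisc δ a' γ' x' z := by
  simp only [qDisc, discretize_logistic, h]

lemma log_qDisc_nonpos (hδ : δ ∈ Set.Ioo (0 : ℝ) 1) (a : ι → ℝ) (γ : ℝ) (x : ι → ℝ) (z : Bool) :
    Real.log (qDisc δ a γ x z) ≤ 0 := by
  obtain ⟨hδ₀, hδ₁⟩ := hδ
  simp only [qDisc, discretize_logistic]
  split_ifs <;> exact Real.log_nonpos (by linarith) (by linarith)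

lemma measurable_log_qDisc (δ : ℝ) (a : ι → ℝ) (γ : ℝ) :
    Measurable fun w : (ι → ℝ) × Bool => Real.log (qDisc δ a γ w.1 w.2) := by
  refine Real.measurable_log.comp (measurable_from_prod_countable_left fun z => ?_)
  have hq : Measurable fun x : ι → ℝ => discretize δ (logistic (∑ i, a i * x i + γ)) :=
    (measurable_discretize δ).comp (measurable_logistic.comp (by fun_prop))
  cases z
  · exact hq
  · exact measurable_const.sub hq

lemma integral_log_qDisc_map {Ω : Type*} [MeasurableSpace Ω] (μ : Measure Ω)
    {g : Ω → (ι → ℝ) × Bool} (hg : Measurable g) (a : ι → ℝ) (γ : ℝ) :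
    ∫ w, Real.log (qDisc δ a γ w.1 w.2) ∂μ.map g = ∫ w, Real.log (qDisc δ a γ (g w).1 (g w).2) ∂μ :=
  integral_map hg.aemeasurable (measurable_log_qDisc δ a γ).aestronglyMeasurable

lemma entDisc_map_eq {Ω : Type*} [MeasurableSpace Ω] (μ : Measure Ω) {f : Ω → ι → ℝ}
    {f' : Ω → κ → ℝ} {l : Ω → Bool} (hf : Measurable f) (hf' : Measurable f') (hl : Measurable l) :
    entDisc δ (μ.map fun w => (f w, l w)) = entDisc δ (μ.map fun w => (f' w, l w)) := by
  unfold entDisc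
  congr 1
  refine iSup_congr fun γ => ?_
  rw [integral_log_qDisc_map μ (hf.prodMk hl), integral_log_qDisc_map μ (hf'.prodMk hl)]
  exact integral_congr_ae (ae_of_all _ fun w => congrArg Real.log (qDisc_congr (by simp) _))

lemma condEntDisc_le_of_forall_exists_eq (hδ : δ ∈ Set.Ioo (0 : ℝ) 1)
    {ν : Measure ((ι → ℝ) × Bool)} {ν' : Measure ((κ → ℝ) × Bool)}
    (h : ∀ p' : (κ → ℝ) × ℝ, ∃ p : (ι → ℝ) × ℝ,
      ∫ w, Real.log (qDisc δ p'.1 p'.2 w.1 w.2) ∂ν' = ∫ w, Real.log (qDisc δ p.1 p.2 w.1 w.2) ∂ν) :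
    condEntDisc δ ν ≤ condEntDisc δ ν' := by
  have hbdd : BddAbove (Set.range fun p : (ι → ℝ) × ℝ =>
      ∫ w, Real.log (qDisc δ p.1 p.2 w.1 w.2) ∂ν) := by
    refine ⟨0, Set.forall_mem_range.2 fun p => integral_nonpos fun w => ?_⟩
    exact log_qDisc_nonpos hδ _ _ _ _
  refine neg_le_neg (ciSup_le fun p' => ?_)
  obtain ⟨p, hp⟩ := h p'
  exact hp ▸ le_ciSup hbdd p

end qDisc

lemma exists_sign_iff_hardThreshold (a γ : ℝ) :
    ∃ c b : ℝ, ∀ u ≠ 0, (0 ≤ a * hardThreshold u + γ ↔ 0 ≤ c * u + b) := by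
  have hτ : ∀ u ≠ 0, a * hardThreshold u + γ = if 0 < u then a + γ else γ := fun u _ => by
    unfold hardThreshold
    split_ifs <;> ring
  by_cases h₁ : 0 ≤ a + γ <;> by_cases h₀ : 0 ≤ γ
  · exact ⟨0, 1, fun u hu => by rw [hτ u hu]; split_ifs <;> simp [*]⟩
  · refine ⟨1, 0, fun u hu => ?_⟩
    rw [hτ u hu]
    rcases hu.lt_or_gt with hu | hu <;> simp [*, hu.le, hu.not_ge, hu.not_gt]
  · refine ⟨-1, 0, fun u hu => ?_⟩
    rw [hτ u hu]
    rcases hu.lt_or_gt with hu | hu <;> simp [*, hu.le, hu.not_ge, hu.not_gt]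
  · exact ⟨0, -1, fun u hu => by rw [hτ u hu]; split_ifs <;> simp [*]⟩

lemma exists_qDisc_hardThreshold_eq {κ : Type*} [Fintype κ] (δ : ℝ) (a : Fin 1 → ℝ) (γ : ℝ)
    (θ : κ → ℝ) (φ : ℝ) :
    ∃ p : (κ → ℝ) × ℝ, ∀ x : κ → ℝ, ∑ i, θ i * x i + φ ≠ 0 → ∀ z,
      qDisc δ a γ (fun _ => hardThreshold (∑ i, θ i * x i + φ)) z = qDisc δ p.1 p.2 x z := by
  obtain ⟨c, b, hcb⟩ := exists_sign_iff_hardThreshold (a 0) γ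
  refine ⟨(c • θ, c * φ + b), fun x hx => qDisc_congr ?_⟩
  have hlin : ∑ i, (c • θ) i * x i + (c * φ + b) = c * (∑ i, θ i * x i + φ) + b := by
    simp only [Pi.smul_apply, smul_eq_mul, mul_assoc, ← Finset.mul_sum]
    ring
  rw [hlin, Fin.sum_univ_one]
  exact hcb _ hx

theorem binary_downstream_guarded_general
    (D : ℕ) (δ : ℝ) (hδ : δ ∈ Set.Ioo (0:ℝ) 1) (ε : ℝ)
    (μ : Measure ((Fin D → ℝ) × Bool))
    (h : (Fin D → ℝ) → (Fin D → ℝ)) (hmeas : Measurable h)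
    (θ : Fin D → ℝ) (φ : ℝ)
    (hne : ∀ᵐ w ∂μ, (∑ i, θ i * h w.1 i) + φ ≠ 0)
    (hguard : vInfoDisc δ (μ.map (fun w => (h w.1, w.2))) < ε) :
    vInfoDisc δ
        (μ.map (fun w => ((fun _ : Fin 1 => hardThreshold ((∑ i, θ i * h w.1 i) + φ)), w.2)))
      < ε := by
  have hX : Measurable fun w : (Fin D → ℝ) × Bool => h w.1 := hmeas.comp measurable_fst
  have hŶ : Measurable fun w : (Fin D → ℝ) × Bool =>
      fun _ : Fin 1 => hardThreshold (∑ i, θ i * h w.1 i + φ) :=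
    measurable_pi_lambda _ fun _ => measurable_hardThreshold.comp (by fun_prop)
  have hent := entDisc_map_eq (δ := δ) μ hŶ hX measurable_snd
  have hcond := condEntDisc_le_of_forall_exists_eq hδ
    (ν := μ.map fun w => (h w.1, w.2))
    (ν' := μ.map fun w => (fun _ : Fin 1 => hardThreshold (∑ i, θ i * h w.1 i + φ), w.2))
    fun ⟨a, γ⟩ => by
      obtain ⟨p, hp⟩ := exists_qDisc_hardThreshold_eq δ a γ θ φ
      refine ⟨p, ?_⟩
      rw [integral_log_qDisc_map μ (hŶ.prodMk measurable_snd),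
        integral_log_qDisc_map μ (hX.prodMk measurable_snd)]
      exact integral_congr_ae (hne.mono fun w hw => congrArg Real.log (hp _ hw _))
  unfold vInfoDisc at hguard ⊢
  linarith

/-- If the guarding function `h` `ε`-guards `X` against `Z` with respect to
`δ`-discretized binary log-linear models, i.e. `I_{V^δ}(h(X) → Z) < ε`, then the
downstream hard-thresholded linear prediction `Ŷ = τ(θᵀh(X) + φ)` (viewed as a
real-valued input) satisfies `I_{V^δ}(Ŷ → Z) < ε`. -/
theorem binary_downstream_guarded
    (D : ℕ) (δ : ℝ) (hδ : δ ∈ Set.Ioo (0:ℝ) 1) (ε : ℝ) (hε : 0 < ε)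
    (μ : Measure ((Fin D → ℝ) × Bool)) [IsProbabilityMeasure μ]
    (h : (Fin D → ℝ) → (Fin D → ℝ)) (hmeas : Measurable h)
    (θ : Fin D → ℝ) (φ : ℝ)
    (hne : ∀ᵐ w ∂μ, (∑ i, θ i * h w.1 i) + φ ≠ 0)
    (hguard : vInfoDisc δ (μ.map (fun w => (h w.1, w.2))) < ε) :
    vInfoDisc δ
        (μ.map (fun w => ((fun _ : Fin 1 => hardThreshold ((∑ i, θ i * h w.1 i) + φ)), w.2)))
      < ε :=
  binary_downstream_guarded_general D δ hδ ε μ h hmeas θ φ hne hguard
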